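/- arXiv:2211.01905 — 2 statements merged into one kernel-verified Lean document; each statement's English description precedes it below -/
import Mathlib

section
/- Let H be a digraph and let (U,V) be an arc of the condensation H/∼ such that U is not a source of H/∼. Then there exists a fractional independent set μ̂ of the contour Γ(H) whose weight equals the fractional independence number α*(Γ(H)) and which satisfies μ̂(v) = 0 for every vertex v of the strongly connected component V. -/
noncomputable section

/-! ### Hypergraphs -/

/-- A hypergraph: a vertex set together with a set of nonempty hyperedges. -/
structure Hypergraph' (V : Type) where
  verts : Set V
  edges : Set (Set V)
  edge_nonempty : ∀ e ∈ edges, e.Nonempty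
  edge_subset : ∀ e ∈ edges, e ⊆ verts

namespace Hypergraph'

variable {V : Type}

/-- An independent set: no two of its vertices lie in a common hyperedge. -/
def IsIndepSet (H : Hypergraph' V) (I : Set V) : Prop :=
  I ⊆ H.verts ∧ ∀ u ∈ I, ∀ v ∈ I, u ≠ v → ∀ e ∈ H.edges, ¬(u ∈ e ∧ v ∈ e)

/-- The independence number `α`. -/
def indepNum (H : Hypergraph' V) : ℕ :=
  sSup {n | ∃ I : Set V, H.IsIndepSet I ∧ I.ncard = n}

/-- A fractional independent set: `μ : V(H) → [0,1]` with `∑_{v ∈ e} μ v ≤ 1` for each edge. -/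
def IsFracIndep (H : Hypergraph' V) (μ : V → ℝ) : Prop :=
  (∀ v, 0 ≤ μ v ∧ μ v ≤ 1) ∧ (∀ v, v ∉ H.verts → μ v = 0) ∧
    ∀ e ∈ H.edges, (∑ᶠ v ∈ e, μ v) ≤ 1

/-- The weight of a (fractional independent) vertex-weighting. -/
def weight (H : Hypergraph' V) (μ : V → ℝ) : ℝ := ∑ᶠ v ∈ H.verts, μ v

/-- The fractional independence number `α*`. -/
def fracIndepNum (H : Hypergraph' V) : ℝ :=
  sSup {w | ∃ μ : V → ℝ, H.IsFracIndep μ ∧ H.weight μ = w}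

/-- A fractional edge cover of a set `X` of vertices. -/
def IsFracEdgeCover (H : Hypergraph' V) (X : Set V) (γ : Set V → ℝ) : Prop :=
  (∀ e, 0 ≤ γ e) ∧ (∀ e, e ∉ H.edges → γ e = 0) ∧
    ∀ v ∈ X, 1 ≤ ∑ᶠ e ∈ {e ∈ H.edges | v ∈ e}, γ e

/-- The weight of an edge-weighting. -/
def coverWeight (H : Hypergraph' V) (γ : Set V → ℝ) : ℝ := ∑ᶠ e ∈ H.edges, γ e

/-- `ρ*_H(X)`: the fractional edge cover number of a set `X` of vertices. -/
def fracCoverOf (H : Hypergraph' V) (X : Set V) : ℝ :=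
  sInf {w | ∃ γ : Set V → ℝ, H.IsFracEdgeCover X γ ∧ H.coverWeight γ = w}

/-- The fractional edge cover number `ρ*(H)`. -/
def fracEdgeCoverNum (H : Hypergraph' V) : ℝ := H.fracCoverOf H.verts

/-- A tree decomposition of a hypergraph. -/
structure TreeDecomp (H : Hypergraph' V) where
  n : ℕ
  tree : SimpleGraph (Fin n)
  isTree : tree.IsTree
  bag : Fin n → Set V
  bag_subset : ∀ t, bag t ⊆ H.verts
  verts_covered : ∀ v ∈ H.verts, ∃ t, v ∈ bag t
  edges_covered : ∀ e ∈ H.edges, ∃ t, e ⊆ bag t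
  bags_connected : ∀ (v : V) (t₁ t₂ : Fin n) (h₁ : v ∈ bag t₁) (h₂ : v ∈ bag t₂),
    (tree.induce {t | v ∈ bag t}).Reachable ⟨t₁, h₁⟩ ⟨t₂, h₂⟩

/-- The `μ`-width of a tree decomposition: the maximum `μ`-weight of a bag. -/
def TreeDecomp.muWidth {H : Hypergraph' V} (td : H.TreeDecomp) (μ : V → ℝ) : ℝ :=
  ⨆ t, ∑ᶠ v ∈ td.bag t, μ v

/-- The `μ`-width of a hypergraph: minimum `μ`-width over tree decompositions. -/
def muWidth (H : Hypergraph' V) (μ : V → ℝ) : ℝ :=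
  sInf {w | ∃ td : H.TreeDecomp, td.muWidth μ = w}

/-- The adaptive width `aw(H)`: supremum of the `μ`-widths over fractional
independent sets `μ`. -/
def adaptiveWidth (H : Hypergraph' V) : ℝ :=
  sSup {w | ∃ μ : V → ℝ, H.IsFracIndep μ ∧ H.muWidth μ = w}

/-- The fractional hypertreewidth `fhtw(H)`. -/
def fhtw (H : Hypergraph' V) : ℝ :=
  sInf {w | ∃ td : H.TreeDecomp, (⨆ t, H.fracCoverOf (td.bag t)) = w}

/-- Add a new vertex `v'` to the hypergraph and replace the hyperedge `e` by `e ∪ {v'}`. -/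
def extendEdge (H : Hypergraph' V) (e : Set V) (he : e ∈ H.edges) (v' : V) :
    Hypergraph' V where
  verts := insert v' H.verts
  edges := (H.edges \ {e}) ∪ {insert v' e}
  edge_nonempty := by
    rintro f (⟨hf, -⟩ | hf)
    · exact H.edge_nonempty f hf
    · rw [Set.mem_singleton_iff] at hf; subst hf; exact ⟨v', Set.mem_insert _ _⟩
  edge_subset := by
    rintro f (⟨hf, -⟩ | hf)
    · exact (H.edge_subset f hf).trans (Set.subset_insert _ _)
    · rw [Set.mem_singleton_iff] at hf; subst hf
      exact Set.insert_subset_insert (H.edge_subset e he)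

end Hypergraph'

/-! ### Digraphs -/

namespace Digraph

variable {V A B : Type}

/-- `u` reaches `v` by a directed path (possibly of length 0). -/
def Reaches (G : Digraph V) (u v : V) : Prop := Relation.ReflTransGen G.Adj u v

/-- `R(u)`: the set of vertices reachable from `u` (including `u`). -/
def reachSet (G : Digraph V) (u : V) : Set V := {v | G.Reaches u v}

/-- The setoid whose classes are the strongly connected components. -/
def sccSetoid (G : Digraph V) : Setoid V where
  r u v := G.Reaches u v ∧ G.Reaches v u
  iseqv := ⟨fun _ => ⟨.refl, .refl⟩, fun h => ⟨h.2, h.1⟩,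
    fun h₁ h₂ => ⟨h₁.1.trans h₂.1, h₂.2.trans h₁.2⟩⟩

/-- The condensation `H/∼`: the loop-free DAG obtained by contracting each strongly
connected component to a single vertex. -/
def cond (G : Digraph V) : Digraph (Quotient G.sccSetoid) where
  Adj X Y := X ≠ Y ∧ ∃ a b, Quotient.mk G.sccSetoid a = X ∧
    Quotient.mk G.sccSetoid b = Y ∧ G.Adj a b

/-- `v` lies in a source component: its strongly connected component is not
reachable from any other component. -/
def InSourceComp (G : Digraph V) (v : V) : Prop := ∀ u, G.Reaches u v → G.Reaches v u

/-- `v` is a source: a vertex of in-degree `0`. -/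
def IsSrc (G : Digraph V) (v : V) : Prop := ∀ u, ¬ G.Adj u v

/-- The reachability hypergraph `R(H)` of a digraph: vertices `V(H)`, one hyperedge
`R(s)` for each (representative `s` of a) source component. -/
def reachHyp (G : Digraph V) : Hypergraph' V where
  verts := Set.univ
  edges := {e | ∃ s, G.InSourceComp s ∧ e = G.reachSet s}
  edge_nonempty := by rintro e ⟨s, -, rfl⟩; exact ⟨s, Relation.ReflTransGen.refl⟩
  edge_subset := fun e _ => Set.subset_univ e

/-- The contour `Γ(H)` of a digraph: the reachability hypergraph with all vertices of
source components deleted (empty hyperedges discarded). -/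
def contour (G : Digraph V) : Hypergraph' V where
  verts := {v | ¬ G.InSourceComp v}
  edges := {e | (∃ s, G.InSourceComp s ∧
    e = G.reachSet s \ {v | G.InSourceComp v}) ∧ e.Nonempty}
  edge_nonempty := fun _ he => he.2
  edge_subset := by rintro e ⟨⟨s, -, rfl⟩, -⟩ v hv; exact hv.2

/-- The reachability hypergraph of a DAG: one hyperedge `R(s)` for each in-degree `0`
vertex `s`. -/
def dagReachHyp (G : Digraph V) : Hypergraph' V where
  verts := Set.univ
  edges := {e | ∃ s, G.IsSrc s ∧ e = G.reachSet s}
  edge_nonempty := by rintro e ⟨s, -, rfl⟩; exact ⟨s, Relation.ReflTransGen.refl⟩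
  edge_subset := fun e _ => Set.subset_univ e

/-- The contour of a DAG: the reachability hypergraph with all sources deleted. -/
def dagContour (G : Digraph V) : Hypergraph' V where
  verts := {v | ¬ G.IsSrc v}
  edges := {e | (∃ s, G.IsSrc s ∧ e = G.reachSet s \ {v | G.IsSrc v}) ∧ e.Nonempty}
  edge_nonempty := fun _ he => he.2
  edge_subset := by rintro e ⟨⟨s, -, rfl⟩, -⟩ v hv; exact hv.2

/-- A homomorphism of digraphs: a map preserving arcs. -/
def IsHom (H : Digraph A) (G : Digraph B) (φ : A → B) : Prop :=
  ∀ ⦃u v⦄, H.Adj u v → G.Adj (φ u) (φ v)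

/-- The tensor product of digraphs. -/
def tensor (G : Digraph A) (F : Digraph B) : Digraph (A × B) where
  Adj x y := G.Adj x.1 y.1 ∧ F.Adj x.2 y.2

/-- The induced subdigraph on a set of vertices. -/
def induce (G : Digraph A) (S : Set A) : Digraph S where
  Adj a b := G.Adj a.1 b.1

/-- The quotient digraph `H/σ` of a digraph by a partition (setoid) of its vertices. -/
def quot (H : Digraph A) (σ : Setoid A) : Digraph (Quotient σ) where
  Adj X Y := ∃ a b, Quotient.mk σ a = X ∧ Quotient.mk σ b = Y ∧ H.Adj a b

/-- A loop-free digraph. -/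
def LoopFree (H : Digraph A) : Prop := ∀ v, ¬ H.Adj v v

/-- A digraph without directed cycles (in particular, without loops). -/
def IsAcyclic (H : Digraph A) : Prop := ∀ u v, H.Adj u v → ¬ H.Reaches v u

/-- A canonical DAG: a DAG in which every vertex has in-degree 0 or out-degree 0. -/
def IsCanonicalDAG (H : Digraph A) : Prop :=
  H.IsAcyclic ∧ ∀ v, (∀ u, ¬ H.Adj u v) ∨ (∀ u, ¬ H.Adj v u)

/-- `t` lies in a sink component: from its strongly connected component no other
component is reachable. -/
def IsSinkVert (H : Digraph A) (t : A) : Prop := ∀ v, H.Reaches t v → H.Reaches v t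

/-- Sink deletion: delete all vertices of the strongly connected component of `t`. -/
def sinkDelete (H : Digraph A) (t : A) :
    Digraph {v : A // ¬ (H.Reaches v t ∧ H.Reaches t v)} where
  Adj a b := H.Adj a.1 b.1

/-- Loop deletion: delete the loop at `u`. -/
def deleteLoop (H : Digraph A) (u : A) : Digraph A where
  Adj a b := H.Adj a b ∧ ¬(a = u ∧ b = u)

/-- The number of sources (in-degree `0` vertices) of the condensation `H/∼`. -/
def numSources (H : Digraph A) : ℕ :=
  {X : Quotient H.sccSetoid | ∀ Y, ¬ H.cond.Adj Y X}.ncard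

end Digraph

/-- The number of homomorphisms from `H` to `G`. -/
def homCount {A B : Type} (H : Digraph A) (G : Digraph B) : ℕ :=
  Nat.card {φ : A → B // H.IsHom G φ}

/-- Two digraphs are isomorphic: a bijection of the vertex sets preserving arcs in
both directions. -/
def DigraphIso {A B : Type} (H : Digraph A) (G : Digraph B) : Prop :=
  ∃ e : A ≃ B, ∀ u v, H.Adj u v ↔ G.Adj (e u) (e v)

/-- The number of subgraphs of `G` (pairs of a vertex subset and an arc subset of `G`
among those vertices) that are isomorphic to `H`. -/
def subCount {A B : Type} (H : Digraph A) (G : Digraph B) : ℕ :=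
  Nat.card {p : Set B × (B → B → Prop) //
    (∀ a b, p.2 a b → a ∈ p.1 ∧ b ∈ p.1 ∧ G.Adj a b) ∧
    DigraphIso H (Digraph.mk fun (a b : p.1) => p.2 a b)}

/-- The number of vertex subsets of `G` inducing a subgraph isomorphic to `H`. -/
def indSubCount {A B : Type} (H : Digraph A) (G : Digraph B) : ℕ :=
  Nat.card {S : Set B // DigraphIso H (G.induce S)}

/-- `H'` is an arc supergraph of the loop-free digraph `H`: a loop-free digraph on the
same vertex set whose arc set contains that of `H`. -/
def ArcSupergraph {A : Type} (H H' : Digraph A) : Prop :=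
  H'.LoopFree ∧ ∀ u v, H.Adj u v → H'.Adj u v

/-- The setoid identifying exactly `u` and `v`. -/
def pairSetoid {A : Type} (u v : A) : Setoid A where
  r a b := a = b ∨ (a ∈ ({u, v} : Set A) ∧ b ∈ ({u, v} : Set A))
  iseqv := by
    refine ⟨fun _ => Or.inl rfl, ?_, ?_⟩
    · rintro a b (rfl | ⟨h₁, h₂⟩)
      · exact Or.inl rfl
      · exact Or.inr ⟨h₂, h₁⟩
    · rintro a b c (rfl | ⟨h₁, h₂⟩) h
      · exact h
      · rcases h with rfl | ⟨h₃, h₄⟩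
        · exact Or.inr ⟨h₁, h₂⟩
        · exact Or.inr ⟨h₁, h₄⟩

/-- Arc contraction: identify the endpoints of the arc `(u,v)`; arcs between `u` and
`v` do not yield a loop. -/
def Digraph.contractArc {A : Type} (H : Digraph A) (u v : A) :
    Digraph (Quotient (pairSetoid u v)) where
  Adj X Y := ∃ a b, Quotient.mk (pairSetoid u v) a = X ∧ Quotient.mk (pairSetoid u v) b = Y ∧
    H.Adj a b ∧ ¬(a ≠ b ∧ a ∈ ({u, v} : Set A) ∧ b ∈ ({u, v} : Set A))

/-- `MRMinor M H`: `M` is a monotone reversible minor of `H`, i.e. `M` can be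
obtained (up to isomorphism) from `H` by a finite sequence of sink deletions,
arc contractions, and loop deletions. -/
inductive MRMinor : ∀ {A : Type}, Digraph A → ∀ {B : Type}, Digraph B → Prop
  | of_iso {A B : Type} {M : Digraph A} {H : Digraph B} :
      DigraphIso M H → MRMinor M H
  | sink_del {A B : Type} {M : Digraph A} {H : Digraph B} (t : B) :
      H.IsSinkVert t → MRMinor M (H.sinkDelete t) → MRMinor M H
  | contract {A B : Type} {M : Digraph A} {H : Digraph B} (u v : B) :
      H.Adj u v → MRMinor M (H.contractArc u v) → MRMinor M H
  | loop_del {A B : Type} {M : Digraph A} {H : Digraph B} (u : B) :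
      H.Adj u u → MRMinor M (H.deleteLoop u) → MRMinor M H

/-- `SinkDelSeq H F`: `F` is obtained from `H` by a finite sequence of sink deletions. -/
inductive SinkDelSeq : ∀ {A : Type}, Digraph A → ∀ {B : Type}, Digraph B → Prop
  | refl {A : Type} (H : Digraph A) : SinkDelSeq H H
  | step {A : Type} {H : Digraph A} (t : A) {B : Type} {F : Digraph B} :
      H.IsSinkVert t → SinkDelSeq (H.sinkDelete t) F → SinkDelSeq H F

/-- The directed split of an undirected graph `F`: vertices `V(F) ⊕ E(F)`, with arcs
from each edge `e = {u,v}` to `u` and to `v`. -/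
def dsplit {α : Type} (F : SimpleGraph α) : Digraph (α ⊕ F.edgeSet) where
  Adj x y :=
    match x, y with
    | Sum.inr e, Sum.inl u => u ∈ e.1
    | _, _ => False

/-- `D` has an induced matching gadget of size `k`: arcs `(s i, w i)` with the `w i`
pairwise distinct such that no source of `D` reaches two distinct `w i`. -/
def HasIMG {A : Type} (D : Digraph A) (k : ℕ) : Prop :=
  ∃ s w : Fin k → A, (∀ i, D.Adj (s i) (w i)) ∧ Function.Injective w ∧
    ∀ x, D.IsSrc x → ∀ i j, D.Reaches x (w i) → D.Reaches x (w j) → i = j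

/-- The maximum size of an induced matching gadget of `D`. -/
def imgNum {A : Type} (D : Digraph A) : ℕ := sSup {k | HasIMG D k}

/-- A fractional cover of a DAG `D`: nonnegative weights on the sources such that each
non-source is covered with total weight at least 1; the total weight is at least 1. -/
def Digraph.IsFracCover {A : Type} (D : Digraph A) (ψ : A → ℝ) : Prop :=
  (∀ s, 0 ≤ ψ s) ∧ (∀ s, ¬ D.IsSrc s → ψ s = 0) ∧
    (∀ v, ¬ D.IsSrc v → 1 ≤ ∑ᶠ s ∈ {s | D.IsSrc s ∧ v ∈ D.reachSet s}, ψ s) ∧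
    1 ≤ ∑ᶠ s ∈ {s | D.IsSrc s}, ψ s

/-- The fractional cover number of a DAG: the minimum weight of a fractional cover. -/
def Digraph.dagFracCoverNum {A : Type} (D : Digraph A) : ℝ :=
  sInf {w | ∃ ψ : A → ℝ, D.IsFracCover ψ ∧ (∑ᶠ s ∈ {s | D.IsSrc s}, ψ s) = w}

/-- The fractional cover number `ρ*(H)` of a digraph: the fractional cover number of
its condensation. -/
def Digraph.fracCoverNum {A : Type} (G : Digraph A) : ℝ := G.cond.dagFracCoverNum

/-!
Take an optimal fractional independent set `μ` of the contour (the feasible weightings form a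
compact set) and move all the mass of the strongly connected component `C` of `v` onto `u`.
Contour edges are closed under reachability and `u` reaches `C`, so every edge containing `u`
contains `C` and keeps its load, while every other edge only loses load. The new weighting is
therefore still feasible, has the same weight as `μ`, and vanishes on `C`.
-/

section FinsumMem

variable {V : Type} [Finite V]

theorem continuous_finsum_mem_apply (S : Set V) : Continuous fun μ : V → ℝ => ∑ᶠ x ∈ S, μ x := by
  classical
  have := Fintype.ofFinite V
  simp only [finsum_mem_eq_toFinset_sum]
  fun_prop

theorem apply_le_finsum_mem {f : V → ℝ} (hf : ∀ x, 0 ≤ f x) {S : Set V} {x : V} (hx : x ∈ S) :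
    f x ≤ ∑ᶠ y ∈ S, f y := by
  classical
  have := Fintype.ofFinite V
  rw [finsum_mem_eq_toFinset_sum]
  exact Finset.single_le_sum (fun y _ => hf y) (Set.mem_toFinset.2 hx)

end FinsumMem

section ShiftMass

open scoped Classical

variable {V : Type}

def shiftMass (μ : V → ℝ) (C : Set V) (u : V) : V → ℝ :=
  μ - C.indicator μ + Pi.single u (∑ᶠ x ∈ C, μ x)

variable {μ : V → ℝ} {C S : Set V} {u x : V}

theorem shiftMass_apply_of_mem (hx : x ∈ C) (hxu : x ≠ u) : shiftMass μ C u x = 0 := by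
  simp [shiftMass, hx, hxu]

theorem shiftMass_le_of_ne (hμ : ∀ x, 0 ≤ μ x) (hxu : x ≠ u) : shiftMass μ C u x ≤ μ x := by
  by_cases hx : x ∈ C <;> simp [shiftMass, hx, hxu, hμ x]

theorem shiftMass_nonneg (hμ : ∀ x, 0 ≤ μ x) (x : V) : 0 ≤ shiftMass μ C u x := by
  have hC : 0 ≤ ∑ᶠ y ∈ C, μ y := finsum_nonneg fun y => finsum_nonneg fun _ => hμ y
  exact add_nonneg (sub_nonneg.2 (Set.indicator_le_self' (fun y _ => hμ y) x))
    (Pi.single_nonneg (α := fun _ => ℝ) |>.2 hC x)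

theorem finsum_mem_shiftMass [Finite V] (huS : u ∈ S) (hCS : C ⊆ S) :
    ∑ᶠ x ∈ S, shiftMass μ C u x = ∑ᶠ x ∈ S, μ x := by
  have := Fintype.ofFinite V
  simp only [finsum_mem_eq_toFinset_sum, shiftMass, Pi.add_apply, Pi.sub_apply,
    Finset.sum_add_distrib, Finset.sum_sub_distrib, Finset.sum_pi_single', Set.mem_toFinset, huS,
    if_true]
  rw [← Set.coe_toFinset C, Finset.sum_indicator_subset _ (Set.toFinset_subset_toFinset.2 hCS),
    Finset.toFinset_coe, sub_add_cancel]

theorem finsum_mem_shiftMass_le [Finite V] (hμ : ∀ x, 0 ≤ μ x) (huS : u ∉ S) :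
    ∑ᶠ x ∈ S, shiftMass μ C u x ≤ ∑ᶠ x ∈ S, μ x := by
  have := Fintype.ofFinite V
  simp only [finsum_mem_eq_toFinset_sum]
  refine Finset.sum_le_sum fun x hx => shiftMass_le_of_ne hμ ?_
  rintro rfl
  exact huS (Set.mem_toFinset.1 hx)

end ShiftMass

namespace Hypergraph'

variable {V : Type} [Finite V]

theorem isCompact_setOf_isFracIndep (H : Hypergraph' V) :
    IsCompact {μ : V → ℝ | H.IsFracIndep μ} := by
  have hclosed : IsClosed {μ : V → ℝ | H.IsFracIndep μ} := by
    simp only [IsFracIndep, Set.ofPred_and, Set.ofPred_forall]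
    refine .inter (isClosed_iInter fun x => ?_) (.inter (isClosed_iInter fun x => ?_)
      (isClosed_iInter fun e => ?_))
    · exact (isClosed_le continuous_const (continuous_apply x)).inter
        (isClosed_le (continuous_apply x) continuous_const)
    · exact isClosed_iInter fun _ => isClosed_eq (continuous_apply x) continuous_const
    · exact isClosed_iInter fun _ => isClosed_le (continuous_finsum_mem_apply e) continuous_const
  exact (isCompact_univ_pi fun _ => isCompact_Icc (a := (0 : ℝ)) (b := 1)).of_isClosed_subset
    hclosed fun μ hμ x _ => hμ.1 x

theorem exists_isFracIndep_weight_eq_fracIndepNum (H : Hypergraph' V) :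
    ∃ μ, H.IsFracIndep μ ∧ H.weight μ = H.fracIndepNum := by
  have hzero : H.IsFracIndep 0 :=
    ⟨fun _ => ⟨le_rfl, zero_le_one⟩, fun _ _ => rfl, fun _ _ => by simp⟩
  obtain ⟨μ, hμ, hmax⟩ := H.isCompact_setOf_isFracIndep.exists_isMaxOn (Set.nonempty_of_mem hzero)
    (continuous_finsum_mem_apply H.verts).continuousOn
  have hgreatest : IsGreatest {w | ∃ ν, H.IsFracIndep ν ∧ H.weight ν = w} (H.weight μ) :=
    ⟨⟨μ, hμ, rfl⟩, by rintro _ ⟨ν, hν, rfl⟩; exact hmax hν⟩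
  exact ⟨μ, hμ, hgreatest.csSup_eq.symm⟩

theorem isFracIndep_shiftMass {H : Hypergraph' V} {μ : V → ℝ} (hμ : H.IsFracIndep μ)
    {C : Set V} {u : V} {e₀ : Set V} (he₀ : e₀ ∈ H.edges) (hue₀ : u ∈ e₀)
    (hC : ∀ e ∈ H.edges, u ∈ e → C ⊆ e) : H.IsFracIndep (shiftMass μ C u) := by
  obtain ⟨hbound, hzero, hedge⟩ := hμ
  have hnonneg x : 0 ≤ μ x := (hbound x).1
  have hedge' : ∀ e ∈ H.edges, ∑ᶠ x ∈ e, shiftMass μ C u x ≤ 1 := by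
    intro e he
    by_cases hue : u ∈ e
    · exact (finsum_mem_shiftMass hue (hC e he hue)).trans_le (hedge e he)
    · exact (finsum_mem_shiftMass_le hnonneg hue).trans (hedge e he)
  refine ⟨fun x => ⟨shiftMass_nonneg hnonneg x, ?_⟩, fun x hx => ?_, hedge'⟩
  · by_cases hxu : x = u
    · subst hxu
      exact (apply_le_finsum_mem (shiftMass_nonneg hnonneg) hue₀).trans (hedge' e₀ he₀)
    · exact (shiftMass_le_of_ne hnonneg hxu).trans (hbound x).2
  · have hxu : x ≠ u := by
      rintro rfl
      exact hx (H.edge_subset e₀ he₀ hue₀)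
    exact le_antisymm ((shiftMass_le_of_ne hnonneg hxu).trans (hzero x hx).le)
      (shiftMass_nonneg hnonneg x)

end Hypergraph'

namespace Digraph

variable {V : Type} {G : Digraph V}

theorem InSourceComp.of_reaches {x y : V} (hxy : G.Reaches x y) (hy : G.InSourceComp y) :
    G.InSourceComp x :=
  fun w hwx => hxy.trans (hy w (hwx.trans hxy))

theorem exists_inSourceComp_reaches [Finite V] (G : Digraph V) (w : V) :
    ∃ s, G.InSourceComp s ∧ G.Reaches s w := by
  let reachesStrictly (x y : V) : Prop := G.Reaches x y ∧ ¬ G.Reaches y x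
  have : IsTrans V reachesStrictly :=
    ⟨fun _ _ _ hab hbc => ⟨hab.1.trans hbc.1, fun hca => hbc.2 (hca.trans hab.1)⟩⟩
  have : Std.Irrefl reachesStrictly := ⟨fun _ h => h.2 h.1⟩
  obtain ⟨s, hsw, hmin⟩ := (Finite.wellFounded_of_trans_of_irrefl reachesStrictly).has_min
    {x | G.Reaches x w} ⟨w, .refl⟩
  exact ⟨s, fun x hxs => by_contra fun hsx => hmin x (hxs.trans hsw) ⟨hxs, hsx⟩, hsw⟩

theorem mem_of_reaches_of_mem_contour_edges {e : Set V} (he : e ∈ G.contour.edges) {x y : V}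
    (hx : x ∈ e) (hxy : G.Reaches x y) : y ∈ e := by
  obtain ⟨⟨s, -, rfl⟩, -⟩ := he
  exact ⟨hx.1.trans hxy, fun hy => hx.2 (hy.of_reaches hxy)⟩

theorem exists_mem_contour_edges [Finite V] {u : V} (hu : ¬ G.InSourceComp u) :
    ∃ e ∈ G.contour.edges, u ∈ e := by
  obtain ⟨s, hs, hsu⟩ := G.exists_inSourceComp_reaches u
  exact ⟨_, ⟨⟨s, hs, rfl⟩, u, hsu, hu⟩, hsu, hu⟩

theorem reaches_of_cond_adj {u v : V}
    (h : G.cond.Adj (Quotient.mk G.sccSetoid u) (Quotient.mk G.sccSetoid v)) : G.Reaches u v := by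
  obtain ⟨-, a, b, ha, hb, hab⟩ := h
  exact (Quotient.exact ha).2.trans (.head hab (Quotient.exact hb).1)

theorem not_reaches_of_cond_adj {u v : V}
    (h : G.cond.Adj (Quotient.mk G.sccSetoid u) (Quotient.mk G.sccSetoid v)) :
    ¬ G.Reaches v u :=
  fun hvu => h.1 (Quotient.sound ⟨reaches_of_cond_adj h, hvu⟩)

end Digraph

theorem stmt16 {V : Type} [Fintype V] (H : Digraph V) (u v : V)
    (hUV : H.cond.Adj (Quotient.mk H.sccSetoid u) (Quotient.mk H.sccSetoid v))
    (hU : ¬ H.InSourceComp u) :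
    ∃ μ : V → ℝ, H.contour.IsFracIndep μ ∧
      H.contour.weight μ = H.contour.fracIndepNum ∧
      ∀ x, H.Reaches x v → H.Reaches v x → μ x = 0 := by
  obtain ⟨μ, hμ, hμmax⟩ := H.contour.exists_isFracIndep_weight_eq_fracIndepNum
  obtain ⟨e, he, hue⟩ := H.exists_mem_contour_edges hU
  set C : Set V := {x | H.Reaches x v ∧ H.Reaches v x}
  have hC : ∀ e ∈ H.contour.edges, u ∈ e → C ⊆ e := fun e he hue x hx =>
    H.mem_of_reaches_of_mem_contour_edges he hue ((H.reaches_of_cond_adj hUV).trans hx.2)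
  have hCverts : C ⊆ H.contour.verts := (hC e he hue).trans (H.contour.edge_subset e he)
  refine ⟨shiftMass μ C u, Hypergraph'.isFracIndep_shiftMass hμ he hue hC, ?_, ?_⟩
  · exact (finsum_mem_shiftMass (H.contour.edge_subset e he hue) hCverts).trans hμmax
  · intro x hxv hvx
    refine shiftMass_apply_of_mem ⟨hxv, hvx⟩ ?_
    rintro rfl
    exact H.not_reaches_of_cond_adj hUV hvx
end
end

section
/- Let F be an undirected graph with k vertices and ℓ edges, and let H be a loop-free digraph whose condensation H/∼ has at least k+ℓ sources, i.e., s(H) ≥ k+ℓ. Then there exists an arc supergraph H' of H such that the directed split dsplit(F) is an MR minor of H'. -/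
noncomputable section

/-!
Choose `k + ℓ` source components of `H`, one for each vertex and each edge of `F`. Add arcs
making each chosen component, and the set `Z` of all remaining vertices, a clique, and arcs
from the component of an edge `e` to the components of both ends of `e`. No arc of `H` enters
a source component from outside, so `Z` has no outgoing arcs and is a single sink component,
removed by one sink deletion; contracting the remaining cliques to points, one arc at a time,
leaves exactly `dsplit F`.
-/

namespace Digraph

variable {W : Type} {D : Digraph W} {u v : W}

theorem contractArc_loopFree (hD : D.LoopFree) : (D.contractArc u v).LoopFree := by
  rintro X ⟨a, b, rfl, hb, hab, hpair⟩
  rcases Quotient.exact hb with rfl | ⟨hb, ha⟩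
  · exact hD _ hab
  · exact hpair ⟨fun h => hD _ (h ▸ hab), ha, hb⟩

theorem contractArc_adj_mk {a b : W} (hab : D.Adj a b)
    (hne : Quotient.mk (pairSetoid u v) a ≠ Quotient.mk (pairSetoid u v) b) :
    (D.contractArc u v).Adj (Quotient.mk _ a) (Quotient.mk _ b) :=
  ⟨a, b, rfl, rfl, hab, fun ⟨_, ha, hb⟩ => hne (Quotient.sound (Or.inr ⟨ha, hb⟩))⟩

end Digraph

theorem card_quotient_pairSetoid_lt {W : Type} [Finite W] {u v : W} (huv : u ≠ v) :
    Nat.card (Quotient (pairSetoid u v)) < Nat.card W := by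
  have := Fintype.ofFinite W
  have := Fintype.ofFinite (Quotient (pairSetoid u v))
  simp only [Nat.card_eq_fintype_card]
  refine Fintype.card_lt_of_surjective_not_injective _ Quotient.mk_surjective fun hinj => ?_
  exact huv (hinj (Quotient.sound (Or.inr ⟨by simp, by simp⟩)))

/-- Induction on `|W|`: contracting an arc inside a fibre keeps all fibres cliques. -/
theorem MRMinor.of_cliqueFibers {W B : Type} [Finite W] {M : Digraph B} {D : Digraph W}
    (hD : D.LoopFree) (κ : W → B) (hsurj : Function.Surjective κ)
    (hclique : ∀ a b, κ a = κ b → a ≠ b → D.Adj a b)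
    (hMadj : ∀ x y, M.Adj x y ↔ x ≠ y ∧ ∃ a b, κ a = x ∧ κ b = y ∧ D.Adj a b) :
    MRMinor M D := by
  induction hn : Nat.card W using Nat.strong_induction_on generalizing W with
  | _ n ih =>
  by_cases hinj : Function.Injective κ
  · let e := Equiv.ofBijective κ ⟨hinj, hsurj⟩
    refine .of_iso ⟨e.symm, fun x y => ?_⟩
    rw [hMadj]
    constructor
    · rintro ⟨-, a, b, rfl, rfl, hab⟩
      convert hab <;> exact e.symm_apply_apply _
    · intro h
      refine ⟨fun hxy => hD _ (hxy ▸ h), _, _, e.apply_symm_apply x, e.apply_symm_apply y, h⟩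
  obtain ⟨u, v, hκuv, huv⟩ : ∃ u v, κ u = κ v ∧ u ≠ v := by
    simpa [Function.Injective] using hinj
  have hresp : ∀ a b, (pairSetoid u v).r a b → κ a = κ b := by
    rintro a b (rfl | ⟨ha, hb⟩)
    · rfl
    · simp only [Set.mem_insert_iff, Set.mem_singleton_iff] at ha hb
      rcases ha with rfl | rfl <;> rcases hb with rfl | rfl <;> simp [hκuv]
  refine .contract u v (hclique u v hκuv huv) (ih _ (hn ▸ card_quotient_pairSetoid_lt huv)
    (Digraph.contractArc_loopFree hD) (Quotient.lift κ hresp) ?_ ?_ ?_ rfl)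
  · exact fun x => (hsurj x).elim fun a ha => ⟨Quotient.mk _ a, ha⟩
  · rintro ⟨a⟩ ⟨b⟩ hab hne
    exact Digraph.contractArc_adj_mk (hclique a b hab fun h => hne (h ▸ rfl)) hne
  · intro x y
    rw [hMadj]
    refine and_congr_right fun hxy => ⟨?_, ?_⟩
    · rintro ⟨a, b, rfl, rfl, hab⟩
      refine ⟨_, _, rfl, rfl, Digraph.contractArc_adj_mk hab fun h => hxy ?_⟩
      exact congrArg (Quotient.lift κ hresp) h
    · rintro ⟨-, -, rfl, rfl, a, b, rfl, rfl, hab, -⟩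
      exact ⟨a, b, rfl, rfl, hab⟩

theorem MRMinor.of_someFibers {W B : Type} [Finite W] {M : Digraph B} {D : Digraph W}
    (hD : D.LoopFree) (κ : W → Option B) (hsome : ∀ a, κ a ≠ none)
    (hsurj : ∀ x, ∃ a, κ a = some x) (hclique : ∀ a b, κ a = κ b → a ≠ b → D.Adj a b)
    (hMadj : ∀ x y, M.Adj x y ↔ x ≠ y ∧ ∃ a b, κ a = some x ∧ κ b = some y ∧ D.Adj a b) :
    MRMinor M D := by
  set κ' : W → B := fun a => (κ a).get (Option.isSome_iff_ne_none.2 (hsome a))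
  have hκ' : ∀ a x, κ' a = x ↔ κ a = some x := fun a x => by
    rw [← Option.some_inj, Option.some_get]
  refine .of_cliqueFibers hD κ' (fun x => ?_) (fun a b hab => hclique a b ?_) (fun x y => ?_)
  · simpa only [hκ'] using hsurj x
  · rw [← Option.some_get (Option.isSome_iff_ne_none.2 (hsome a)), ← (hκ' b _).1 hab.symm]
  · simpa only [hκ'] using hMadj x y

/-- A block of vertices that is a clique and has no arcs leaving it is a single sink
component, so it disappears in one sink deletion. -/
theorem MRMinor.of_cliqueFibers_of_sinkBlock {W B : Type} [Finite W] {M : Digraph B}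
    {D : Digraph W} (hD : D.LoopFree) (κ : W → Option B) (hsurj : ∀ x, ∃ a, κ a = some x)
    (hclique : ∀ a b, κ a = κ b → a ≠ b → D.Adj a b)
    (hsink : ∀ a b, D.Adj a b → κ a = none → κ b = none)
    (hMadj : ∀ x y, M.Adj x y ↔ x ≠ y ∧ ∃ a b, κ a = some x ∧ κ b = some y ∧ D.Adj a b) :
    MRMinor M D := by
  by_cases hZ : ∀ a, κ a ≠ none
  · exact .of_someFibers hD κ hZ hsurj hclique hMadj
  push Not at hZ
  obtain ⟨t, ht⟩ := hZ
  have hreach : ∀ v, D.Reaches t v → κ v = none := fun v htv => by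
    induction htv with
    | refl => exact ht
    | tail _ hadj ih => exact hsink _ _ hadj ih
  have hmutual : ∀ v, κ v = none → D.Reaches v t ∧ D.Reaches t v := fun v hv => by
    by_cases hvt : v = t
    · exact hvt ▸ ⟨.refl, .refl⟩
    · exact ⟨.single (hclique v t (hv.trans ht.symm) hvt),
        .single (hclique t v (ht.trans hv.symm) (Ne.symm hvt))⟩
  have hkeep : ∀ v, κ v ≠ none → ¬(D.Reaches v t ∧ D.Reaches t v) :=
    fun v hv h => hv (hreach v h.2)
  refine .sink_del t (fun v htv => (hmutual v (hreach v htv)).1) ?_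
  refine .of_someFibers (κ := fun w => κ w.1) (fun w => hD w.1)
    (fun w hw => w.2 (hmutual w.1 hw)) (fun x => ?_)
    (fun a b hab hne => hclique a.1 b.1 hab fun h => hne (Subtype.ext h)) (fun x y => ?_)
  · obtain ⟨a, ha⟩ := hsurj x
    exact ⟨⟨a, hkeep a (by simp [ha])⟩, ha⟩
  · rw [hMadj]
    refine and_congr_right fun _ => ⟨?_, ?_⟩
    · rintro ⟨a, b, ha, hb, hab⟩
      exact ⟨⟨a, hkeep a (by simp [ha])⟩, ⟨b, hkeep b (by simp [hb])⟩, ha, hb, hab⟩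
    · rintro ⟨a, b, ha, hb, hab⟩
      exact ⟨a.1, b.1, ha, hb, hab⟩

namespace Digraph

variable {V B : Type}

def supBlowUp (H : Digraph V) (M : Digraph B) (κ : V → Option B) : Digraph V where
  Adj a b := a ≠ b ∧ (H.Adj a b ∨ κ a = κ b ∨ ∃ x y, κ a = some x ∧ κ b = some y ∧ M.Adj x y)

theorem arcSupergraph_supBlowUp {H : Digraph V} (hH : H.LoopFree) (M : Digraph B)
    (κ : V → Option B) : ArcSupergraph H (H.supBlowUp M κ) :=
  ⟨fun _ h => h.1 rfl, fun u _ h => ⟨fun e => hH u (e ▸ h), Or.inl h⟩⟩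

/-- `hentry` (no arc of `H` enters a block `κ⁻¹(some x)` from outside) is what stops the
arcs of `H` from joining two blocks or leaving the block `κ⁻¹(none)`. -/
theorem mrMinor_supBlowUp [Finite V] {H : Digraph V} {M : Digraph B} (hM : M.LoopFree)
    (κ : V → Option B) (hsurj : ∀ x, ∃ a, κ a = some x)
    (hentry : ∀ a b, H.Adj a b → κ b ≠ none → κ a = κ b) :
    MRMinor M (H.supBlowUp M κ) := by
  refine .of_cliqueFibers_of_sinkBlock (fun _ h => h.1 rfl) κ hsurj
    (fun a b hab hne => ⟨hne, Or.inr (Or.inl hab)⟩) ?_ fun x y => ⟨fun hxy => ?_, ?_⟩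
  · rintro a b ⟨-, hab | hab | ⟨x, y, hx, -, -⟩⟩ ha
    · by_contra hb
      exact hb ((hentry a b hab hb).symm.trans ha)
    · exact hab ▸ ha
    · cases ha.symm.trans hx
  · obtain ⟨a, ha⟩ := hsurj x
    obtain ⟨b, hb⟩ := hsurj y
    have hne : x ≠ y := fun h => hM x (h ▸ hxy)
    refine ⟨hne, a, b, ha, hb, fun h => hne ?_, Or.inr (Or.inr ⟨x, y, ha, hb, hxy⟩)⟩
    simpa [ha, hb] using congrArg κ h
  · rintro ⟨hne, a, b, ha, hb, -, hab | hab | ⟨x', y', hx', hy', hxy⟩⟩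
    · exact absurd (by simpa [ha, hb] using hentry a b hab (by simp [hb])) hne
    · exact absurd (by simpa [ha, hb] using hab) hne
    · rw [ha, Option.some_inj] at hx'
      rw [hb, Option.some_inj] at hy'
      exact hx' ▸ hy' ▸ hxy

theorem mk_eq_of_adj_of_isSource {H : Digraph V} {a b : V}
    (hb : ∀ Y, ¬ H.cond.Adj Y (Quotient.mk _ b)) (hab : H.Adj a b) :
    Quotient.mk H.sccSetoid a = Quotient.mk H.sccSetoid b :=
  by_contra fun h => hb _ ⟨h, a, b, rfl, rfl, hab⟩

theorem exists_injective_isSource [Finite V] [Finite B] {H : Digraph V}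
    (hcard : Nat.card B ≤ H.numSources) :
    ∃ ι : B → Quotient H.sccSetoid, Function.Injective ι ∧ ∀ x Y, ¬ H.cond.Adj Y (ι x) := by
  set S := {X : Quotient H.sccSetoid | ∀ Y, ¬ H.cond.Adj Y X}
  have := Fintype.ofFinite B
  have := Fintype.ofFinite S
  obtain ⟨f⟩ : Nonempty (B ↪ S) := Function.Embedding.nonempty_of_card_le <| by
    rwa [← Nat.card_eq_fintype_card, ← Nat.card_eq_fintype_card, Nat.card_coe_set_eq]
  exact ⟨fun x => f x, Subtype.val_injective.comp f.injective, fun x => (f x).2⟩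

theorem exists_arcSupergraph_mrMinor [Finite V] [Finite B] {H : Digraph V} (hH : H.LoopFree)
    {M : Digraph B} (hM : M.LoopFree) (hcard : Nat.card B ≤ H.numSources) :
    ∃ H' : Digraph V, ArcSupergraph H H' ∧ MRMinor M H' := by
  obtain ⟨ι, hι, hsrc⟩ := exists_injective_isSource hcard
  set κ : V → Option B := fun v => Function.partialInv ι (Quotient.mk _ v)
  have hκ : ∀ v x, κ v = some x ↔ ι x = Quotient.mk _ v := fun v x => hι.isPartialInv x _
  refine ⟨H.supBlowUp M κ, arcSupergraph_supBlowUp hH M κ, mrMinor_supBlowUp hM κ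
    (fun x => ⟨(ι x).out, (hκ _ x).2 (Quotient.out_eq _).symm⟩) fun a b hab hb => ?_⟩
  obtain ⟨x, hx⟩ := Option.ne_none_iff_exists'.1 hb
  have hsrc_b := (hκ b x).1 hx ▸ hsrc x
  exact congrArg (Function.partialInv ι) (mk_eq_of_adj_of_isSource hsrc_b hab)

end Digraph

theorem dsplit_loopFree {α : Type} (F : SimpleGraph α) : (dsplit F).LoopFree := by
  rintro (_ | _) h <;> exact h

theorem stmt18 {α V : Type} [Fintype α] [Fintype V]
    (F : SimpleGraph α) (k ℓ : ℕ) (hk : Fintype.card α = k) (hℓ : F.edgeSet.ncard = ℓ)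
    (H : Digraph V) (hH : H.LoopFree) (hs : k + ℓ ≤ H.numSources) :
    ∃ H' : Digraph V, ArcSupergraph H H' ∧ MRMinor (dsplit F) H' := by
  refine Digraph.exists_arcSupergraph_mrMinor hH (dsplit_loopFree F) ?_
  rwa [Nat.card_sum, Nat.card_eq_fintype_card, Nat.card_coe_set_eq, hk, hℓ]
end
end
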